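/- arXiv:2510.04091 — 2 statements merged into one kernel-verified Lean document; each statement's English description precedes it below -/
import Mathlib

section
/- Let X be a discrete random variable (instance), and let S (candidate flag) and Y (true label flag) be {0,1}-valued random variables with joint distribution satisfying: P(S=0 | X=x, Y=1) = 0 for all x, and P(S=0 | X=x, Y=0) = p for a constant p > 0 independent of x, and suppose P(S=0) > 0. Then for every x, P(X=x | S=0) = P(X=x | Y=0). -/
/-
Summing `P(S = 0, X = x, Y = y)` over `y` gives `P(S = 0, X = x) = p · P(X = x, Y = 0)`,
since the `Y = 1` term vanishes. Summing once more over `x` gives `P(S = 0) = p · P(Y = 0)`,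
and the common factor `p` cancels from the ratio defining `P(X = x | S = 0)`.
-/

open Finset

/-- Probability of an event under a weight function on a finite sample space. -/
noncomputable def Pr {Ω : Type*} [Fintype Ω] (w : Ω → ℝ) (A : Set Ω) : ℝ :=
  ∑ ω, A.indicator w ω

/-- Conditional probability `P(A | B)` under a weight function. -/
noncomputable def condPr {Ω : Type*} [Fintype Ω] (w : Ω → ℝ) (A B : Set Ω) : ℝ :=
  Pr w (A ∩ B) / Pr w B

section Pr

variable {Ω : Type*} [Fintype Ω] {w : Ω → ℝ}

lemma Pr_nonneg (hw : ∀ ω, 0 ≤ w ω) (A : Set Ω) : 0 ≤ Pr w A :=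
  sum_nonneg fun ω _ => Set.indicator_nonneg (fun ω _ => hw ω) ω

lemma Pr_mono (hw : ∀ ω, 0 ≤ w ω) {A B : Set Ω} (h : A ⊆ B) : Pr w A ≤ Pr w B :=
  sum_le_sum fun ω _ => Set.indicator_le_indicator_of_subset h hw ω

lemma Pr_eq_sum_inter_fiber {β : Type*} [Fintype β] (w : Ω → ℝ) (f : Ω → β) (A : Set Ω) :
    Pr w A = ∑ b, Pr w (A ∩ {ω | f ω = b}) := by
  classical
  unfold Pr
  rw [sum_comm]
  refine sum_congr rfl fun ω _ => ?_
  by_cases hA : ω ∈ A <;> simp [Set.indicator_apply, hA]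

lemma Pr_inter_eq_condPr_mul (hw : ∀ ω, 0 ≤ w ω) (A B : Set Ω) :
    Pr w (A ∩ B) = condPr w A B * Pr w B := by
  unfold condPr
  rcases eq_or_ne (Pr w B) 0 with hB | hB
  · have hAB : Pr w (A ∩ B) ≤ Pr w B := Pr_mono hw Set.inter_subset_right
    rw [hB, mul_zero]
    exact le_antisymm (hB ▸ hAB) (Pr_nonneg hw _)
  · exact (div_mul_cancel₀ _ hB).symm

end Pr

theorem stmt0_general {Ω α : Type*} [Fintype Ω] [Fintype α]
    (w : Ω → ℝ) (hw : ∀ ω, 0 ≤ w ω)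
    (X : Ω → α) (S Y : Ω → Fin 2) (p : ℝ) (hp : 0 < p)
    (hSY1 : ∀ x : α, condPr w {ω | S ω = 0} ({ω | X ω = x} ∩ {ω | Y ω = 1}) = 0)
    (hSY0 : ∀ x : α, condPr w {ω | S ω = 0} ({ω | X ω = x} ∩ {ω | Y ω = 0}) = p) :
    ∀ x : α, condPr w {ω | X ω = x} {ω | S ω = 0} = condPr w {ω | X ω = x} {ω | Y ω = 0} := by
  have hjoint : ∀ x : α,
      Pr w ({ω | S ω = 0} ∩ {ω | X ω = x}) = p * Pr w ({ω | X ω = x} ∩ {ω | Y ω = 0}) := by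
    intro x
    rw [Pr_eq_sum_inter_fiber w Y, Fin.sum_univ_two, Set.inter_assoc, Set.inter_assoc,
      Pr_inter_eq_condPr_mul hw {ω | S ω = 0}, Pr_inter_eq_condPr_mul hw {ω | S ω = 0}, hSY0,
      hSY1, zero_mul, add_zero]
  have hmarg : Pr w {ω | S ω = 0} = p * Pr w {ω | Y ω = 0} := by
    rw [Pr_eq_sum_inter_fiber w X {ω | S ω = 0}, Pr_eq_sum_inter_fiber w X {ω | Y ω = 0},
      mul_sum]
    exact sum_congr rfl fun x _ => by rw [hjoint, Set.inter_comm]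
  intro x
  rw [condPr, condPr, Set.inter_comm, hjoint, hmarg, mul_div_mul_left _ _ hp.ne']

/-- Data-generation lemma for PML: if a relevant label (`Y = 1`) is never a non-candidate
(`S = 0`), and an irrelevant label is a non-candidate with constant probability `p > 0`
independent of the instance `X = x`, then conditioning on `S = 0` gives the same
instance distribution as conditioning on `Y = 0`. -/
theorem stmt0 {Ω α : Type*} [Fintype Ω] [Fintype α]
    (w : Ω → ℝ) (hw : ∀ ω, 0 ≤ w ω) (hw1 : ∑ ω, w ω = 1)
    (X : Ω → α) (S Y : Ω → Fin 2) (p : ℝ) (hp : 0 < p)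
    (hSY1 : ∀ x : α, condPr w {ω | S ω = 0} ({ω | X ω = x} ∩ {ω | Y ω = 1}) = 0)
    (hSY0 : ∀ x : α, condPr w {ω | S ω = 0} ({ω | X ω = x} ∩ {ω | Y ω = 0}) = p)
    (hS : 0 < Pr w {ω | S ω = 0})
    (hY : 0 < Pr w {ω | Y ω = 0}) :
    ∀ x : α, condPr w {ω | X ω = x} {ω | S ω = 0} = condPr w {ω | X ω = x} {ω | Y ω = 0} :=
  stmt0_general w hw X S Y p hp hSY1 hSY0
end

section
/- Let X be a discrete random variable, q ≥ 1, Y = (Y_1,…,Y_q) a {0,1}^q-valued random vector with π_j = P(Y_j = 1) < 1 for each j, and ℓ a binary loss. Define the ℓ-risk w.r.t. Hamming loss of g = (g_1,…,g_q) as R(g) = E[(1/q) Σ_{j=1}^q ℓ(g_j(X), Y_j)]. Then R(g) = E[(1/q) Σ_j ℓ(g_j(X), 1)] + Σ_j ((1-π_j)/q) · E[ℓ(g_j(X),0) - ℓ(g_j(X),1) | Y_j = 0]. -/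
open Finset

/-- Expectation of a real random variable under a weight function. -/
noncomputable def Ex {Ω : Type*} [Fintype Ω] (w : Ω → ℝ) (f : Ω → ℝ) : ℝ :=
  ∑ ω, w ω * f ω

/-- Conditional expectation `E[f | B]` under a weight function. -/
noncomputable def condEx {Ω : Type*} [Fintype Ω] (w : Ω → ℝ) (f : Ω → ℝ) (B : Set Ω) : ℝ :=
  (∑ ω, B.indicator (fun ω => w ω * f ω) ω) / Pr w B

section

variable {Ω : Type*} [Fintype Ω] (w : Ω → ℝ)

lemma Ex_add (f g : Ω → ℝ) : Ex w (fun ω => f ω + g ω) = Ex w f + Ex w g := by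
  simp only [Ex, mul_add, sum_add_distrib]

lemma Ex_const_mul (c : ℝ) (f : Ω → ℝ) : Ex w (fun ω => c * f ω) = c * Ex w f := by
  simp only [Ex, mul_sum, mul_left_comm]

lemma Ex_sum {ι : Type*} (s : Finset ι) (f : ι → Ω → ℝ) :
    Ex w (fun ω => ∑ i ∈ s, f i ω) = ∑ i ∈ s, Ex w (f i) := by
  simp only [Ex, mul_sum]
  exact sum_comm

lemma Pr_add_Pr_compl (A : Set Ω) : Pr w A + Pr w Aᶜ = ∑ ω, w ω := by
  simp only [Pr, ← sum_add_distrib, Set.indicator_self_add_compl_apply]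

lemma Pr_mul_condEx {B : Set Ω} (hB : Pr w B ≠ 0) (f : Ω → ℝ) :
    Pr w B * condEx w f B = Ex w (B.indicator f) := by
  simp only [condEx, mul_div_cancel₀ _ hB, Ex, Set.indicator_mul_right]

lemma Pr_eq_zero_eq_one_sub (hw1 : ∑ ω, w ω = 1) (Z : Ω → Fin 2) :
    Pr w {ω | Z ω = 0} = 1 - Pr w {ω | Z ω = 1} := by
  have hcompl : {ω | Z ω = 0} = {ω | Z ω = 1}ᶜ := by
    ext ω
    simp only [Set.mem_ofPred_eq, Set.mem_compl_iff]
    omega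
  rw [hcompl, ← hw1, ← Pr_add_Pr_compl w {ω | Z ω = 1}]
  ring

end

lemma apply_fin_two_eq_add_indicator {Ω : Type*} (Z : Ω → Fin 2) (h : Ω → Fin 2 → ℝ) (ω : Ω) :
    h ω (Z ω) = h ω 1 + {ω | Z ω = 0}.indicator (fun ω => h ω 0 - h ω 1) ω := by
  by_cases hZ : Z ω = 0
  · simp [hZ]
  · simp [Fin.eq_one_of_ne_zero _ hZ]

theorem stmt2_general {Ω α : Type*} [Fintype Ω] (q : ℕ)
    (w : Ω → ℝ) (hw1 : ∑ ω, w ω = 1)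
    (X : Ω → α) (Y : Ω → Fin q → Fin 2) (ℓ : ℝ → Fin 2 → ℝ) (g : Fin q → α → ℝ)
    (hπ : ∀ j : Fin q, Pr w {ω | Y ω j = 1} < 1) :
    Ex w (fun ω => (q : ℝ)⁻¹ * ∑ j, ℓ (g j (X ω)) (Y ω j))
      = Ex w (fun ω => (q : ℝ)⁻¹ * ∑ j, ℓ (g j (X ω)) 1)
        + ∑ j, ((1 - Pr w {ω | Y ω j = 1}) / q)
            * condEx w (fun ω => ℓ (g j (X ω)) 0 - ℓ (g j (X ω)) 1) {ω | Y ω j = 0} := by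
  have hterm : ∀ j, ((1 - Pr w {ω | Y ω j = 1}) / q)
        * condEx w (fun ω => ℓ (g j (X ω)) 0 - ℓ (g j (X ω)) 1) {ω | Y ω j = 0}
      = (q : ℝ)⁻¹ * Ex w ({ω | Y ω j = 0}.indicator fun ω => ℓ (g j (X ω)) 0 - ℓ (g j (X ω)) 1) := by
    intro j
    rw [← Pr_eq_zero_eq_one_sub w hw1, div_eq_inv_mul, mul_assoc,
      Pr_mul_condEx w (by linarith [hπ j, Pr_eq_zero_eq_one_sub w hw1 (fun ω => Y ω j)])]
  have hdecomp : ∀ ω j, ℓ (g j (X ω)) (Y ω j) = ℓ (g j (X ω)) 1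
      + {ω | Y ω j = 0}.indicator (fun ω => ℓ (g j (X ω)) 0 - ℓ (g j (X ω)) 1) ω :=
    fun ω j => apply_fin_two_eq_add_indicator (fun ω => Y ω j) (fun ω => ℓ (g j (X ω))) ω
  simp only [hdecomp, hterm, sum_add_distrib, mul_add, Ex_add, Ex_const_mul, Ex_sum, mul_sum]

/-- Multi-label rewriting of the ℓ-risk w.r.t. the Hamming loss:
`R(g) = E[(1/q)Σ_j ℓ(g_j(X),1)] + Σ_j ((1-π_j)/q)·E[ℓ(g_j(X),0)-ℓ(g_j(X),1) | Y_j = 0]`. -/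
theorem stmt2 {Ω α : Type*} [Fintype Ω] (q : ℕ) (hq : 1 ≤ q)
    (w : Ω → ℝ) (hw : ∀ ω, 0 ≤ w ω) (hw1 : ∑ ω, w ω = 1)
    (X : Ω → α) (Y : Ω → Fin q → Fin 2) (ℓ : ℝ → Fin 2 → ℝ) (g : Fin q → α → ℝ)
    (hπ : ∀ j : Fin q, Pr w {ω | Y ω j = 1} < 1) :
    Ex w (fun ω => (q : ℝ)⁻¹ * ∑ j, ℓ (g j (X ω)) (Y ω j))
      = Ex w (fun ω => (q : ℝ)⁻¹ * ∑ j, ℓ (g j (X ω)) 1)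
        + ∑ j, ((1 - Pr w {ω | Y ω j = 1}) / q)
            * condEx w (fun ω => ℓ (g j (X ω)) 0 - ℓ (g j (X ω)) 1) {ω | Y ω j = 0} :=
  stmt2_general q w hw1 X Y ℓ g hπ
end
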